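/- arXiv:2509.24292 — 9 statements merged into one kernel-verified Lean document; each statement's English description precedes it below -/
import Mathlib

section
/- Every Artinian S-act is co-Hopfian; that is, if A is an S-act whose congruences satisfy the descending chain condition, then every injective S-endomorphism of A is surjective (hence an automorphism). -/
structure RAct (S : Type*) [Monoid S] (A : Type*) where
  act : A → S → A
  act_one : ∀ a, act a 1 = a
  act_mul : ∀ a s t, act a (s * t) = act (act a s) t

variable {S : Type*} [Monoid S] {A B : Type*}

/-- `f` is an S-act homomorphism from `M` to `N`. -/
def IsHom (M : RAct S A) (N : RAct S B) (f : A → B) : Prop :=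
  ∀ a s, f (M.act a s) = N.act (f a) s

/-- `f` is an S-act endomorphism of `M`. -/
def IsEnd (M : RAct S A) (f : A → A) : Prop := IsHom M M f

/-- `r` is a congruence on the S-act `M`. -/
def IsCong (M : RAct S A) (r : A → A → Prop) : Prop :=
  Equivalence r ∧ ∀ a b s, r a b → r (M.act a s) (M.act b s)

/-- The kernel congruence `K_f`. -/
def kerC {A : Type*} (f : A → A) : A → A → Prop := fun a b => f a = f b

/-- The image congruence `I_f = (im f × im f) ∪ Δ`. -/
def imC {A : Type*} (f : A → A) : A → A → Prop :=
  fun a b => a = b ∨ (a ∈ Set.range f ∧ b ∈ Set.range f)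

/-- The diagonal relation. -/
def diagR (A : Type*) : A → A → Prop := fun a b => a = b

/-- The full relation. -/
def fullR (A : Type*) : A → A → Prop := fun _ _ => True

/-- `M` is strongly Hopfian: the chain `K_f ⊆ K_{f²} ⊆ ⋯` stabilizes for every endomorphism. -/
def StronglyHopfian (M : RAct S A) : Prop :=
  ∀ f : A → A, IsEnd M f → ∃ n : ℕ, 1 ≤ n ∧ ∀ m, n ≤ m → kerC (f^[m]) = kerC (f^[n])

/-- `M` is strongly co-Hopfian: the chain `I_f ⊇ I_{f²} ⊇ ⋯` stabilizes for every endomorphism. -/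
def StronglyCoHopfian (M : RAct S A) : Prop :=
  ∀ f : A → A, IsEnd M f → ∃ n : ℕ, 1 ≤ n ∧ ∀ m, n ≤ m → imC (f^[m]) = imC (f^[n])

/-- `M` is Hopfian: every surjective endomorphism is injective. -/
def Hopfian (M : RAct S A) : Prop :=
  ∀ f : A → A, IsEnd M f → Function.Surjective f → Function.Injective f

/-- `M` is co-Hopfian: every injective endomorphism is surjective. -/
def CoHopfian (M : RAct S A) : Prop :=
  ∀ f : A → A, IsEnd M f → Function.Injective f → Function.Surjective f

/-- ACC on congruences. -/
def NoetherianAct (M : RAct S A) : Prop :=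
  ∀ c : ℕ → (A → A → Prop), (∀ n, IsCong M (c n)) →
    (∀ n a b, c n a b → c (n + 1) a b) → ∃ N, ∀ m, N ≤ m → c m = c N

/-- DCC on congruences. -/
def ArtinianAct (M : RAct S A) : Prop :=
  ∀ c : ℕ → (A → A → Prop), (∀ n, IsCong M (c n)) →
    (∀ n a b, c (n + 1) a b → c n a b) → ∃ N, ∀ m, N ≤ m → c m = c N

/-- The monoid `S` as a right act over itself. -/
def mulAct (S : Type*) [Monoid S] : RAct S S :=
  ⟨fun x s => x * s, mul_one, fun a s t => (mul_assoc a s t).symm⟩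

/-! The images of the powers of `f` give a descending chain of Rees congruences `I_{fⁿ}`, which
must stabilise: `I_{f^{N+1}} = I_{f^N}`. For any `x`, the pair `(f^N x, f^N (f x))` lies in
`I_{f^N}`, hence in `I_{f^{N+1}}`; either the two entries coincide or `f^N x ∈ im f^{N+1}`, and
in both cases cancelling the injective `f^N` exhibits `x` as a value of `f`. -/

open Function

theorem IsEnd.iterate {M : RAct S A} {f : A → A} (hf : IsEnd M f) (n : ℕ) :
    IsEnd M f^[n] := by
  induction n with
  | zero => intro a s; rfl
  | succ n ih => intro a s; rw [iterate_succ_apply', ih, hf, iterate_succ_apply']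

theorem isCong_imC {M : RAct S A} {g : A → A} (hg : IsEnd M g) : IsCong M (imC g) := by
  refine ⟨⟨fun _ => Or.inl rfl, ?_, ?_⟩, ?_⟩
  · rintro a b (rfl | ⟨ha, hb⟩)
    exacts [Or.inl rfl, Or.inr ⟨hb, ha⟩]
  · rintro a b c (rfl | ⟨ha, hb⟩) (rfl | ⟨hb', hc⟩)
    exacts [Or.inl rfl, Or.inr ⟨hb', hc⟩, Or.inr ⟨ha, hb⟩, Or.inr ⟨ha, hc⟩]
  · rintro a b s (rfl | ⟨⟨x, rfl⟩, ⟨y, rfl⟩⟩)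
    exacts [Or.inl rfl, Or.inr ⟨⟨M.act x s, hg x s⟩, ⟨M.act y s, hg y s⟩⟩]

theorem imC_mono {g h : A → A} (hgh : Set.range g ⊆ Set.range h) {a b : A} :
    imC g a b → imC h a b :=
  Or.imp_right fun hab => ⟨hgh hab.1, hgh hab.2⟩

theorem imC_iterate_succ_le (f : A → A) (n : ℕ) {a b : A} :
    imC f^[n + 1] a b → imC f^[n] a b :=
  imC_mono <| by rw [iterate_succ]; exact Set.range_comp_subset_range f f^[n]

theorem surjective_of_imC_iterate_succ_eq {f : A → A} (hi : Injective f) {n : ℕ}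
    (hn : imC f^[n + 1] = imC f^[n]) : Surjective f := by
  intro x
  have hx : imC f^[n + 1] (f^[n] x) (f^[n] (f x)) := hn ▸ Or.inr ⟨⟨x, rfl⟩, ⟨f x, rfl⟩⟩
  rcases hx with hfix | ⟨⟨u, hu⟩, -⟩
  · exact ⟨x, (hi.iterate n hfix).symm⟩
  · exact ⟨u, hi.iterate n (by rwa [iterate_succ_apply] at hu)⟩

/-- Every Artinian S-act is co-Hopfian. -/
theorem stmt1 (M : RAct S A) (hA : ArtinianAct M)
    (f : A → A) (hf : IsEnd M f) (hi : Function.Injective f) :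
    Function.Surjective f := by
  obtain ⟨N, hN⟩ := hA (fun n => imC f^[n]) (fun n => isCong_imC (hf.iterate n))
    (fun n _ _ => imC_iterate_succ_le f n)
  exact surjective_of_imC_iterate_succ_eq hi (hN (N + 1) N.le_succ)
end

section
/- An S-act A is strongly Hopfian if and only if for every S-endomorphism f of A there exists n ≥ 1 such that I_{f^n} ∩ K_{f^n} = Δ_A. -/
variable {S : Type*} [Monoid S] {A B : Type*}

/-!
`I_g ∩ K_g = Δ` says exactly that `g` is injective on its image. For `g = f^[n]` this is the
statement `K_{f^{2n}} = K_{f^n}`, and once the kernel chain of `f^[n]` stops growing at its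
second term it never grows again, so the chain `K_{f^m}` is constant from `m = n` on.
-/

variable {α : Type*}

theorem kerC_iterate_mono (f : α → α) {m m' : ℕ} (h : m ≤ m') {a b : α}
    (hab : kerC f^[m] a b) : kerC f^[m'] a b := by
  obtain ⟨k, rfl⟩ := Nat.exists_eq_add_of_le h
  simp only [kerC, Nat.add_comm m k, Function.iterate_add_apply] at hab ⊢
  rw [hab]

theorem imC_inf_kerC_iff_injOn (g : α → α) :
    (∀ a b, (imC g a b ∧ kerC g a b) ↔ a = b) ↔ Set.InjOn g (Set.range g) := by
  constructor
  · rintro h _ ⟨x, rfl⟩ _ ⟨y, rfl⟩ hxy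
    exact (h _ _).1 ⟨Or.inr ⟨⟨x, rfl⟩, ⟨y, rfl⟩⟩, hxy⟩
  · intro h a b
    refine ⟨?_, fun hab => ⟨Or.inl hab, congrArg g hab⟩⟩
    rintro ⟨rfl | ⟨ha, hb⟩, hab⟩
    exacts [rfl, h ha hb hab]

theorem kerC_iterate_succ_le_of_injOn_range {g : α → α} (hg : Set.InjOn g (Set.range g))
    (k : ℕ) {a b : α} (hab : kerC g^[k + 1] a b) : kerC g a b := by
  induction k generalizing a b with
  | zero => exact hab
  | succ k ih =>
    have hga : kerC g^[k + 1] (g a) (g b) := by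
      simpa only [kerC, ← Function.iterate_succ_apply] using hab
    exact hg ⟨a, rfl⟩ ⟨b, rfl⟩ (ih hga)

theorem kerC_iterate_stable_iff_injOn_range (f : α → α) {n : ℕ} (hn : 1 ≤ n) :
    (∀ m, n ≤ m → kerC f^[m] = kerC f^[n]) ↔ Set.InjOn f^[n] (Set.range f^[n]) := by
  constructor
  · rintro h _ ⟨x, rfl⟩ _ ⟨y, rfl⟩ hxy
    have hker : kerC f^[n + n] x y := by
      simpa only [kerC, Function.iterate_add_apply] using hxy
    rwa [h (n + n) (Nat.le_add_right n n)] at hker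
  · intro hg m hm
    funext a b
    refine propext ⟨fun hab => ?_, kerC_iterate_mono f hm⟩
    have hle : m ≤ n * (m + 1) := by nlinarith
    have hker : kerC (f^[n])^[m + 1] a b := by
      simpa only [kerC, Function.iterate_mul] using kerC_iterate_mono f hle hab
    exact kerC_iterate_succ_le_of_injOn_range hg m hker

theorem stmt7 (M : RAct S A) :
    StronglyHopfian M ↔ ∀ f : A → A, IsEnd M f →
      ∃ n : ℕ, 1 ≤ n ∧ ∀ a b : A, (imC (f^[n]) a b ∧ kerC (f^[n]) a b) ↔ a = b :=
  forall₂_congr fun f _ => exists_congr fun _ => and_congr_right fun hn =>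
    (kerC_iterate_stable_iff_injOn_range f hn).trans (imC_inf_kerC_iff_injOn _).symm
end

section
/- An S-act A is strongly co-Hopfian if and only if for every S-endomorphism f of A there exists n ≥ 1 such that the join of congruences I_{f^n} ∨ K_{f^n} equals A × A. -/
variable {S : Type*} [Monoid S] {A B : Type*}

/-!
For `g : A → A`, the class of `a` in the join `I_g ∨ K_g` is determined by whether `g a` lies
in `g '' range g`: `K_g` preserves `g a`, and `I_g` only links points of `range g`, all of which
qualify. Since every `a` is joined to `g a ∈ range g`, the join is full exactly when
`range g ⊆ range (g ∘ g)`. For `g = f^[n]` (with `n ≥ 1`) this says `range f^[n] = range f^[n+1]`,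
after which the ranges of the iterates, hence the relations `I_{f^m}`, are constant; conversely
`I_{f^{2n}} = I_{f^n}` forces it by looking at the pairs `(f^n x, f^{2n} x)`.
-/

open Function Set

theorem Relation.EqvGen.iff_of_forall_rel_iff {α : Type*} {r : α → α → Prop} {p : α → Prop}
    (h : ∀ a b, r a b → (p a ↔ p b)) {a b : α} (hab : Relation.EqvGen r a b) : p a ↔ p b := by
  induction hab with
  | rel a b hr => exact h a b hr
  | refl => rfl
  | symm _ _ _ ih => exact ih.symm
  | trans _ _ _ _ _ ih₁ ih₂ => exact ih₁.trans ih₂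

theorem range_iterate_subset_of_le (f : A → A) {m k : ℕ} (h : m ≤ k) :
    range f^[k] ⊆ range f^[m] := by
  obtain ⟨j, rfl⟩ := Nat.exists_eq_add_of_le h
  rw [iterate_add]
  exact range_comp_subset_range _ _

theorem range_iterate_add_eq_of_range_iterate_succ_eq (f : A → A) {n : ℕ}
    (h : range f^[n + 1] = range f^[n]) (k : ℕ) : range f^[n + k] = range f^[n] := by
  induction k with
  | zero => rfl
  | succ k ih =>
    rw [← add_assoc, iterate_succ', range_comp, ih, ← range_comp, ← iterate_succ', h]

theorem imC_eq_of_range_eq {g g' : A → A} (h : range g = range g') : imC g = imC g' := by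
  unfold imC
  rw [h]

theorem range_subset_range_comp_self_of_imC_eq {g : A → A} (h : imC (g ∘ g) = imC g) :
    range g ⊆ range (g ∘ g) := by
  rintro _ ⟨x, rfl⟩
  have hpair : imC (g ∘ g) (g x) (g (g x)) := h ▸ Or.inr ⟨⟨x, rfl⟩, ⟨g x, rfl⟩⟩
  rcases hpair with heq | ⟨hx, _⟩
  · exact ⟨x, heq.symm⟩
  · exact hx

theorem imC_iterate_stabilizes_iff (f : A → A) :
    (∃ n : ℕ, 1 ≤ n ∧ ∀ m, n ≤ m → imC f^[m] = imC f^[n]) ↔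
      ∃ n : ℕ, 1 ≤ n ∧ range f^[n] ⊆ range (f^[n] ∘ f^[n]) := by
  constructor
  · rintro ⟨n, hn, hstab⟩
    refine ⟨n, hn, range_subset_range_comp_self_of_imC_eq ?_⟩
    rw [← iterate_add]
    exact hstab (n + n) (Nat.le_add_right n n)
  · rintro ⟨n, hn, hsub⟩
    have hsucc : range f^[n + 1] = range f^[n] := by
      refine (range_iterate_subset_of_le f n.le_succ).antisymm ?_
      rw [← iterate_add] at hsub
      exact hsub.trans (range_iterate_subset_of_le f (by omega))
    refine ⟨n, hn, fun m hm => ?_⟩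
    obtain ⟨k, rfl⟩ := Nat.exists_eq_add_of_le hm
    exact imC_eq_of_range_eq (range_iterate_add_eq_of_range_iterate_succ_eq f hsucc k)

theorem forall_eqvGen_imC_or_kerC_iff (g : A → A) :
    (∀ a b : A, Relation.EqvGen (fun x y => imC g x y ∨ kerC g x y) a b) ↔
      range g ⊆ range (g ∘ g) := by
  constructor
  · rintro hfull _ ⟨x, rfl⟩
    have hrel : ∀ a b, (imC g a b ∨ kerC g a b) →
        (g a ∈ range (g ∘ g) ↔ g b ∈ range (g ∘ g)) := by
      rintro a b ((rfl | ⟨⟨u, rfl⟩, ⟨v, rfl⟩⟩) | hker)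
      · rfl
      · exact iff_of_true ⟨u, rfl⟩ ⟨v, rfl⟩
      · rw [show g a = g b from hker]
    exact (Relation.EqvGen.iff_of_forall_rel_iff hrel (hfull x (g x))).mpr ⟨x, rfl⟩
  · intro hsub a b
    obtain ⟨c, hc⟩ := hsub ⟨a, rfl⟩
    obtain ⟨d, hd⟩ := hsub ⟨b, rfl⟩
    have hac : kerC g a (g c) := hc.symm
    have hcd : imC g (g c) (g d) := Or.inr ⟨⟨c, rfl⟩, ⟨d, rfl⟩⟩
    have hbd : kerC g b (g d) := hd.symm
    exact .trans _ _ _ (.rel _ _ (.inr hac))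
      (.trans _ _ _ (.rel _ _ (.inl hcd)) (.symm _ _ (.rel _ _ (.inr hbd))))

/-- Strongly co-Hopfian iff the join `I_{f^n} ∨ K_{f^n}` is the full relation for some `n`. -/
theorem stmt9 (M : RAct S A) :
    StronglyCoHopfian M ↔ ∀ f : A → A, IsEnd M f →
      ∃ n : ℕ, 1 ≤ n ∧ ∀ a b : A,
        Relation.EqvGen (fun x y => imC (f^[n]) x y ∨ kerC (f^[n]) x y) a b := by
  refine forall_congr' fun f => imp_congr_right fun _ => ?_
  simp only [imC_iterate_stabilizes_iff, forall_eqvGen_imC_or_kerC_iff]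
end

section
/- The right S-act S is strongly Hopfian if and only if for every s ∈ S there exists n ∈ N such that r(s^n) = r(s^{n+1}), where r(t) = {(x,y) ∈ S × S : tx = ty}. -/
variable {S : Type*} [Monoid S] {A B : Type*}

theorem kerC_le_kerC_iterate_add {α : Type*} (f : α → α) (n k : ℕ) {x y : α}
    (h : kerC f^[n] x y) : kerC f^[k + n] x y := by
  simp only [kerC, Function.iterate_add_apply] at h ⊢
  rw [h]

theorem kerC_iterate_add_of_kerC_iterate_succ {α : Type*} {f : α → α} {n : ℕ}
    (h : kerC f^[n + 1] = kerC f^[n]) (k : ℕ) : kerC f^[n + k] = kerC f^[n] := by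
  induction k with
  | zero => rfl
  | succ k ih =>
    funext x y
    refine propext ⟨fun hxy => ?_, fun hxy => ?_⟩
    · have hshift : kerC f^[n + 1] (f^[k] x) (f^[k] y) := by
        simpa only [kerC, ← Function.iterate_add_apply, Nat.add_right_comm n 1 k,
          ← Nat.add_assoc] using hxy
      rw [h] at hshift
      rw [← ih]
      simpa only [kerC, ← Function.iterate_add_apply] using hshift
    · rw [Nat.add_comm n]
      exact kerC_le_kerC_iterate_add f n (k + 1) hxy

theorem stronglyHopfian_iff_exists_kerC_iterate_succ_eq (M : RAct S A) :
    StronglyHopfian M ↔ ∀ f, IsEnd M f → ∃ n, 1 ≤ n ∧ kerC f^[n + 1] = kerC f^[n] := by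
  refine forall₂_congr fun f _ => exists_congr fun n => and_congr_right fun _ => ?_
  refine ⟨fun h => h (n + 1) n.le_succ, fun h m hm => ?_⟩
  obtain ⟨k, rfl⟩ := Nat.exists_eq_add_of_le hm
  exact kerC_iterate_add_of_kerC_iterate_succ h k

theorem isEnd_mulAct_iff {f : S → S} : IsEnd (mulAct S) f ↔ ∃ s, f = (s * ·) := by
  constructor
  · intro hf
    refine ⟨f 1, funext fun x => ?_⟩
    simpa [mulAct] using hf 1 x
  · rintro ⟨s, rfl⟩ x t
    exact (mul_assoc s x t).symm

theorem kerC_iterate_mul_left (s : S) (n : ℕ) :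
    kerC (s * ·)^[n] = fun x y => s ^ n * x = s ^ n * y := by
  rw [mul_left_iterate]
  rfl

theorem stmt11 : StronglyHopfian (mulAct S) ↔
    ∀ s : S, ∃ n : ℕ, 1 ≤ n ∧
      ∀ x y : S, s ^ n * x = s ^ n * y ↔ s ^ (n + 1) * x = s ^ (n + 1) * y := by
  rw [stronglyHopfian_iff_exists_kerC_iterate_succ_eq]
  constructor
  · intro H s
    obtain ⟨n, hn, hker⟩ := H _ (isEnd_mulAct_iff.mpr ⟨s, rfl⟩)
    rw [kerC_iterate_mul_left, kerC_iterate_mul_left] at hker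
    exact ⟨n, hn, fun x y => (iff_of_eq (congrFun₂ hker x y)).symm⟩
  · intro H f hf
    obtain ⟨s, rfl⟩ := isEnd_mulAct_iff.mp hf
    obtain ⟨n, hn, hr⟩ := H s
    refine ⟨n, hn, ?_⟩
    rw [kerC_iterate_mul_left, kerC_iterate_mul_left]
    funext x y
    exact propext (hr x y).symm
end

section
/- The right S-act S is strongly co-Hopfian if and only if for every s ∈ S there exist n ∈ N and t ∈ S such that s^n = s^{n+1} t. -/
variable {S : Type*} [Monoid S] {A B : Type*}

/-!
Endomorphisms of `S_S` are left translations `x ↦ a * x`, the `n`-th iterate of which has image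
`a ^ n * S`. Since `I_f` only depends on the image of `f`, the chain stabilises exactly when the
principal right ideals `a ^ n * S` do, and `a ^ n * S = a ^ (n + 1) * S` means `a ^ n ∈ a ^ (n + 1) * S`.
-/

theorem imC_eq_of_range_eq_s12 {α : Type*} {f g : α → α} (h : Set.range f = Set.range g) : imC f = imC g := by
  funext x y
  simp only [imC, h]

section Monoid

variable {M : Type*} [Monoid M]

theorem pow_eq_pow_add_mul_pow {a t : M} {n : ℕ} (h : a ^ n = a ^ (n + 1) * t) (k : ℕ) :
    a ^ n = a ^ (n + k) * t ^ k := by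
  induction k with
  | zero => simp
  | succ k ih =>
    calc a ^ n = a ^ (n + k) * t ^ k := ih
      _ = a ^ k * (a ^ n * t ^ k) := by rw [← mul_assoc, ← pow_add, add_comm k n]
      _ = a ^ k * (a ^ (n + 1) * t * t ^ k) := by rw [← h]
      _ = a ^ (n + (k + 1)) * t ^ (k + 1) := by
        rw [pow_succ' t, ← mul_assoc, ← mul_assoc, ← pow_add, add_left_comm, mul_assoc]

theorem range_pow_add_mul_left {a t : M} {n : ℕ} (h : a ^ n = a ^ (n + 1) * t) (k : ℕ) :
    Set.range (a ^ (n + k) * ·) = Set.range (a ^ n * ·) := by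
  refine subset_antisymm ?_ ?_
  · rintro _ ⟨y, rfl⟩
    exact ⟨a ^ k * y, by simp only [← mul_assoc, ← pow_add]⟩
  · rintro _ ⟨y, rfl⟩
    exact ⟨t ^ k * y, by simp only [← mul_assoc, ← pow_eq_pow_add_mul_pow h]⟩

theorem exists_pow_eq_pow_succ_mul_of_imC_eq {a : M} {n : ℕ}
    (h : imC (a ^ (n + 1) * ·) = imC (a ^ n * ·)) : ∃ t, a ^ n = a ^ (n + 1) * t := by
  have hrel : imC (a ^ n * ·) (a ^ n) (a ^ (n + 1)) :=
    Or.inr ⟨⟨1, mul_one _⟩, ⟨a, (pow_succ a n).symm⟩⟩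
  rw [← h] at hrel
  rcases hrel with heq | ⟨⟨t, ht⟩, -⟩
  · exact ⟨1, by rw [mul_one, ← heq]⟩
  · exact ⟨t, ht.symm⟩

end Monoid

theorem isEnd_mulAct_mul_left (a : S) : IsEnd (mulAct S) (a * ·) :=
  fun x s => (mul_assoc a x s).symm

theorem IsEnd.eq_mul_left {f : S → S} (hf : IsEnd (mulAct S) f) : f = (f 1 * ·) :=
  funext fun x => by simpa [mulAct] using hf 1 x

theorem stmt12 : StronglyCoHopfian (mulAct S) ↔
    ∀ s : S, ∃ n : ℕ, 1 ≤ n ∧ ∃ t : S, s ^ n = s ^ (n + 1) * t := by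
  constructor
  · intro H s
    obtain ⟨n, hn, hstab⟩ := H _ (isEnd_mulAct_mul_left s)
    simp only [mul_left_iterate] at hstab
    exact ⟨n, hn, exists_pow_eq_pow_succ_mul_of_imC_eq (hstab (n + 1) n.le_succ)⟩
  · intro H f hf
    obtain ⟨n, hn, t, ht⟩ := H (f 1)
    refine ⟨n, hn, fun m hm => ?_⟩
    obtain ⟨k, rfl⟩ := Nat.exists_eq_add_of_le hm
    rw [hf.eq_mul_left, mul_left_iterate, mul_left_iterate]
    exact imC_eq_of_range_eq_s12 (range_pow_add_mul_left ht k)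
end

section
/- A proper retract of a strongly Hopfian S-act is strongly Hopfian: if there are S-homomorphisms γ : A → B and π : B → A with π ∘ γ = id_A, and B is strongly Hopfian, then A is strongly Hopfian. -/
variable {S : Type*} [Monoid S] {A B : Type*}

theorem IsHom.comp {C : Type*} {M : RAct S A} {N : RAct S B} {P : RAct S C}
    {g : B → C} {f : A → B} (hg : IsHom N P g) (hf : IsHom M N f) : IsHom M P (g ∘ f) :=
  fun a s => by simp only [Function.comp_apply, hf a s, hg (f a) s]

theorem kerC_iterate_eq_of_semiconj {f : A → A} {g : B → B} {γ : A → B}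
    (hγ : Function.Injective γ) (h : Function.Semiconj γ f g) (m : ℕ) :
    kerC (f^[m]) = fun a b => kerC (g^[m]) (γ a) (γ b) := by
  funext a b
  simp only [kerC, ← (h.iterate_right m).eq, hγ.eq_iff]

/-- A retract of a strongly Hopfian S-act is strongly Hopfian. -/
theorem stmt15 (M : RAct S A) (N : RAct S B) (γ : A → B) (π : B → A)
    (hγ : IsHom M N γ) (hπ : IsHom N M π) (hret : π ∘ γ = id)
    (hB : StronglyHopfian N) : StronglyHopfian M := by
  intro f hf
  have hπγ : Function.LeftInverse π γ := congrFun hret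
  have hsemi : Function.Semiconj γ f (γ ∘ f ∘ π) := fun a => by
    simp only [Function.comp_apply, hπγ a]
  obtain ⟨n, hn, hstab⟩ := hB (γ ∘ f ∘ π) (hγ.comp (hf.comp hπ))
  refine ⟨n, hn, fun m hm => ?_⟩
  rw [kerC_iterate_eq_of_semiconj hπγ.injective hsemi m,
    kerC_iterate_eq_of_semiconj hπγ.injective hsemi n, hstab m hm]
end

section
/- Let A be a strongly co-Hopfian S-act and h : A → B a surjective S-homomorphism such that every endomorphism f of B is induced by an endomorphism g of A (i.e., f ∘ h = h ∘ g). Then B is strongly co-Hopfian. -/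
variable {S : Type*} [Monoid S] {A B : Type*}

lemma imC_eq_of_range_eq_s16 {A : Type*} {f f' : A → A}
    (hr : Set.range f = Set.range f') : imC f = imC f' := by
  funext a b
  unfold imC
  rw [hr]

theorem stmt16 (M : RAct S A) (N : RAct S B) (h : A → B) (hh : IsHom M N h)
    (hs : Function.Surjective h)
    (hlift : ∀ f : B → B, IsEnd N f → ∃ g : A → A, IsEnd M g ∧ f ∘ h = h ∘ g)
    (hA : StronglyCoHopfian M) : StronglyCoHopfian N := by
  intro f hf
  obtain ⟨g, hg, hcomm⟩ := hlift f hf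
  have hcomm' : ∀ a, f (h a) = h (g a) := fun a => congrFun hcomm a
  have hiter : ∀ k a, f^[k] (h a) = h (g^[k] a) := by
    intro k
    induction k with
    | zero => simp
    | succ k ih =>
      intro a
      rw [Function.iterate_succ_apply, Function.iterate_succ_apply, hcomm', ih]
  have hrange : ∀ k, Set.range (f^[k]) = h '' Set.range (g^[k]) := by
    intro k
    ext b
    constructor
    · rintro ⟨b', rfl⟩
      obtain ⟨a, rfl⟩ := hs b'
      exact ⟨g^[k] a, ⟨a, rfl⟩, (hiter k a).symm⟩
    · rintro ⟨x, ⟨a, rfl⟩, rfl⟩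
      exact ⟨h a, hiter k a⟩
  obtain ⟨n, hn1, hn⟩ := hA g hg
  refine ⟨n, hn1, fun m hm => ?_⟩
  have hsubm : Set.range (g^[m]) ⊆ Set.range (g^[n]) := by
    obtain ⟨k, rfl⟩ := Nat.exists_eq_add_of_le hm
    rintro _ ⟨a, rfl⟩
    rw [Function.iterate_add_apply]
    exact ⟨_, rfl⟩
  by_cases hpair : ∃ x y, x ∈ Set.range (g^[n]) ∧ y ∈ Set.range (g^[n]) ∧ x ≠ y
  · obtain ⟨x, y, hx, hy, hxy⟩ := hpair
    have hmem : ∀ z ∈ Set.range (g^[n]), z ∈ Set.range (g^[m]) := by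
      intro z hz
      by_cases hzx : z = x
      · have hzy : z ≠ y := by rw [hzx]; exact hxy
        have : imC (g^[m]) z y := by rw [hn m hm]; exact Or.inr ⟨hz, hy⟩
        rcases this with h1 | h1
        · exact absurd h1 hzy
        · exact h1.1
      · have : imC (g^[m]) z x := by rw [hn m hm]; exact Or.inr ⟨hz, hx⟩
        rcases this with h1 | h1
        · exact absurd h1 hzx
        · exact h1.1
    have hrm : Set.range (g^[m]) = Set.range (g^[n]) :=
      Set.Subset.antisymm hsubm hmem
    exact imC_eq_of_range_eq_s16 (by rw [hrange m, hrange n, hrm])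
  · push_neg at hpair
    have hsubB : ∀ x ∈ Set.range (f^[n]), ∀ y ∈ Set.range (f^[n]), x = y := by
      rw [hrange n]
      rintro _ ⟨u, hu, rfl⟩ _ ⟨v, hv, rfl⟩
      rw [hpair u v hu hv]
    have hsubBm : Set.range (f^[m]) ⊆ Set.range (f^[n]) := by
      rw [hrange m, hrange n]
      exact Set.image_mono hsubm
    funext a b
    apply propext
    constructor
    · rintro (rfl | ⟨ha, hb⟩)
      · exact Or.inl rfl
      · exact Or.inl (hsubB a (hsubBm ha) b (hsubBm hb))
    · rintro (rfl | ⟨ha, hb⟩)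
      · exact Or.inl rfl
      · exact Or.inl (hsubB a ha b hb)
end

section
/- If B is a fully invariant subact of an S-act A (i.e., f(B) ⊆ B for every endomorphism f of A), and both B and the Rees quotient A/B are strongly Hopfian, then A is strongly Hopfian. -/
variable {S : Type*} [Monoid S] {A B : Type*}

/-- The Rees relation of a subset `Bs`. -/
def reesRel {A : Type*} (Bs : Set A) : A → A → Prop :=
  fun a b => a = b ∨ (a ∈ Bs ∧ b ∈ Bs)

/-- The Rees relation is an equivalence. -/
def reesSetoid {A : Type*} (Bs : Set A) : Setoid A where
  r := reesRel Bs
  iseqv := by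
    constructor
    · intro a; exact Or.inl rfl
    · intro a b h
      rcases h with e | h
      · exact Or.inl e.symm
      · exact Or.inr ⟨h.2, h.1⟩
    · intro a b c h1 h2
      rcases h1 with e | h1
      · rw [e]; exact h2
      · rcases h2 with e | h2
        · exact Or.inr ⟨h1.1, e ▸ h1.2⟩
        · exact Or.inr ⟨h1.1, h2.2⟩

/-- A subact `Bs` of `M` as an S-act in its own right. -/
def subAct (M : RAct S A) (Bs : Set A) (hB : ∀ b ∈ Bs, ∀ s : S, M.act b s ∈ Bs) :
    RAct S Bs where
  act := fun b s => ⟨M.act b.1 s, hB b.1 b.2 s⟩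
  act_one := fun b => Subtype.ext (M.act_one b.1)
  act_mul := fun b s t => Subtype.ext (M.act_mul b.1 s t)

/-- The Rees quotient act `A/B`. -/
def reesQuotAct (M : RAct S A) (Bs : Set A) (hB : ∀ b ∈ Bs, ∀ s : S, M.act b s ∈ Bs) :
    RAct S (Quotient (reesSetoid Bs)) where
  act := fun q s => Quotient.map' (fun a => M.act a s)
    (fun a b h => by
      rcases h with e | h
      · exact Or.inl (by rw [e])
      · exact Or.inr ⟨hB a h.1 s, hB b h.2 s⟩) q
  act_one := by
    intro q
    induction q using Quotient.inductionOn'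
    exact congrArg (Quotient.mk'' ·) (M.act_one _)
  act_mul := by
    intro q s t
    induction q using Quotient.inductionOn'
    exact congrArg (Quotient.mk'' ·) (M.act_mul _ s t)

/- Fix an endomorphism `f` and let `n₁`, `n₂` be the stabilization indices of its
restriction to `B` and of the induced map on `A/B`. If `f^m a = f^m b` with `m ≥ n₁ + n₂`, then
`f^{n₂} a` and `f^{n₂} b` are identified in `A/B`: either they are equal, or both lie in `B`, where
the restriction identifies them already after `n₁` further steps. Hence `K_{f^m} = K_{f^{n₁+n₂}}`. -/

theorem kerC_iterate_mono_s17 {X : Type*} (f : X → X) {n m : ℕ} (hnm : n ≤ m) {x y : X}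
    (h : kerC (f^[n]) x y) : kerC (f^[m]) x y := by
  obtain ⟨k, rfl⟩ := Nat.exists_eq_add_of_le' hnm
  simp only [kerC, Function.iterate_add_apply] at h ⊢
  rw [h]

theorem kerC_iterate_of_stable {X : Type*} {f : X → X} {n m : ℕ}
    (hstab : ∀ m, n ≤ m → kerC (f^[m]) = kerC (f^[n])) (hnm : n ≤ m) {x y : X}
    (h : kerC (f^[m]) x y) : kerC (f^[n]) x y := by
  rwa [← hstab m hnm]

section Rees

variable {Bs : Set A} {f : A → A}

def reesMap (hBf : Set.MapsTo f Bs Bs) :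
    Quotient (reesSetoid Bs) → Quotient (reesSetoid Bs) :=
  Quotient.map' f fun _ _ h => h.imp (congrArg f) fun hab => ⟨hBf hab.1, hBf hab.2⟩

theorem reesMap_iterate_mk (hBf : Set.MapsTo f Bs Bs) (k : ℕ) (a : A) :
    (reesMap hBf)^[k] (Quotient.mk'' a) = Quotient.mk'' (f^[k] a) :=
  ((Function.Semiconj.iterate_right (f := Quotient.mk'' (s₁ := reesSetoid Bs))
    (fun _ => rfl) k) a).symm

theorem kerC_reesMap_iterate_mk (hBf : Set.MapsTo f Bs Bs) (k : ℕ) (a b : A) :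
    kerC ((reesMap hBf)^[k]) (Quotient.mk'' a) (Quotient.mk'' b) ↔
      reesRel Bs (f^[k] a) (f^[k] b) := by
  simp only [kerC, reesMap_iterate_mk]
  exact Quotient.eq''

theorem kerC_iterate_stable_of_restrict_of_reesMap (hBf : Set.MapsTo f Bs Bs) {n₁ n₂ : ℕ}
    (h₁ : ∀ m, n₁ ≤ m → kerC (hBf.restrict^[m]) = kerC (hBf.restrict^[n₁]))
    (h₂ : ∀ m, n₂ ≤ m → kerC ((reesMap hBf)^[m]) = kerC ((reesMap hBf)^[n₂]))
    (m : ℕ) (hm : n₁ + n₂ ≤ m) :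
    kerC (f^[m]) = kerC (f^[n₁ + n₂]) := by
  funext a b
  refine propext ⟨fun hab => ?_, kerC_iterate_mono_s17 f hm⟩
  have hq : kerC ((reesMap hBf)^[m]) (Quotient.mk'' a) (Quotient.mk'' b) :=
    (kerC_reesMap_iterate_mk hBf m a b).2 (Or.inl hab)
  show f^[n₁ + n₂] a = f^[n₁ + n₂] b
  rw [Function.iterate_add_apply, Function.iterate_add_apply]
  rcases (kerC_reesMap_iterate_mk hBf n₂ a b).1 (kerC_iterate_of_stable h₂ (by omega) hq) with
    heq | ⟨ha, hb⟩
  · rw [heq]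
  · have hrestr : kerC (hBf.restrict^[m - n₂]) ⟨_, ha⟩ ⟨_, hb⟩ := by
      refine Subtype.ext ?_
      simp only [Set.MapsTo.coe_iterate_restrict, ← Function.iterate_add_apply,
        Nat.sub_add_cancel (show n₂ ≤ m by omega)]
      exact hab
    simpa only [kerC, Subtype.ext_iff, Set.MapsTo.coe_iterate_restrict] using
      kerC_iterate_of_stable h₁ (by omega) hrestr

variable (M : RAct S A) (hsub : ∀ b ∈ Bs, ∀ s : S, M.act b s ∈ Bs)

theorem isEnd_subAct_restrict (hf : IsEnd M f) (hBf : Set.MapsTo f Bs Bs) :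
    IsEnd (subAct M Bs hsub) hBf.restrict :=
  fun a s => Subtype.ext (hf a.1 s)

theorem isEnd_reesQuotAct_reesMap (hf : IsEnd M f) (hBf : Set.MapsTo f Bs Bs) :
    IsEnd (reesQuotAct M Bs hsub) (reesMap hBf) := by
  intro q s
  induction q using Quotient.inductionOn'
  exact congrArg Quotient.mk'' (hf _ s)

end Rees

/-- If `B` is a fully invariant subact of `A` and both `B` and the Rees quotient `A/B` are
strongly Hopfian, then so is `A`. -/
theorem stmt17 (M : RAct S A) (Bs : Set A)
    (hsub : ∀ b ∈ Bs, ∀ s : S, M.act b s ∈ Bs)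
    (hfi : ∀ f : A → A, IsEnd M f → ∀ b ∈ Bs, f b ∈ Bs)
    (hBH : StronglyHopfian (subAct M Bs hsub))
    (hQH : StronglyHopfian (reesQuotAct M Bs hsub)) :
    StronglyHopfian M := by
  intro f hf
  have hBf : Set.MapsTo f Bs Bs := hfi f hf
  obtain ⟨n₁, -, h₁⟩ := hBH _ (isEnd_subAct_restrict M hsub hf hBf)
  obtain ⟨n₂, hn₂, h₂⟩ := hQH _ (isEnd_reesQuotAct_reesMap M hsub hf hBf)
  exact ⟨n₁ + n₂, by omega, kerC_iterate_stable_of_restrict_of_reesMap hBf h₁ h₂⟩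
end

section
/- If the endomorphism monoid End_S(A) of an S-act A is strongly π-regular (for every f there exist g and n with f^n = g f^{n+1} = f^{n+1} g), then A is both strongly Hopfian and strongly co-Hopfian. -/
variable {S : Type*} [Monoid S] {A B : Type*}

/-!
If `f^n = g f^(n+1)` then `f^n = g^k f^(n+k)` for every `k`, so `f^(n+k)` forgets no more than
`f^n` does and the kernels stabilise from `n` on. Dually, `f^n = f^(n+1) g` gives
`f^n = f^(n+k) g^k`, so the images of the powers of `f` stop shrinking at `n`.
-/

section Iterate

variable {f g : A → A} {n : ℕ}

theorem iterate_eq_iterate_comp_iterate_add_left (h : f^[n] = g ∘ f^[n + 1]) (k : ℕ) :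
    f^[n] = g^[k] ∘ f^[n + k] := by
  have shift : ∀ j, f^[n + j] = g ∘ f^[n + j + 1] := fun j => by
    rw [Function.iterate_add, h, Function.comp_assoc, ← Function.iterate_add, Nat.add_right_comm]
  induction k with
  | zero => rfl
  | succ k ih => rw [ih, shift k, ← Nat.add_assoc, Function.iterate_succ g k]; rfl

theorem iterate_eq_iterate_add_comp_iterate_right (h : f^[n] = f^[n + 1] ∘ g) (k : ℕ) :
    f^[n] = f^[n + k] ∘ g^[k] := by
  have shift : ∀ j, f^[n + j] = f^[n + j + 1] ∘ g := fun j => by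
    rw [add_comm n j, Function.iterate_add, h, ← Function.comp_assoc, ← Function.iterate_add,
      Nat.add_assoc]
  induction k with
  | zero => rfl
  | succ k ih => rw [ih, shift k, ← Nat.add_assoc, Function.iterate_succ' g k]; rfl

theorem kerC_iterate_eq_of_le (h : f^[n] = g ∘ f^[n + 1]) {m : ℕ} (hm : n ≤ m) :
    kerC f^[m] = kerC f^[n] := by
  obtain ⟨k, rfl⟩ := Nat.exists_eq_add_of_le hm
  funext a b
  refine propext ⟨fun hab => ?_, fun hab => ?_⟩
  · show f^[n] a = f^[n] b
    rw [iterate_eq_iterate_comp_iterate_add_left h k]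
    exact congrArg g^[k] hab
  · show f^[n + k] a = f^[n + k] b
    rw [add_comm, Function.iterate_add_apply, Function.iterate_add_apply, hab]

theorem range_iterate_eq_of_le (h : f^[n] = f^[n + 1] ∘ g) {m : ℕ} (hm : n ≤ m) :
    Set.range f^[m] = Set.range f^[n] := by
  obtain ⟨k, rfl⟩ := Nat.exists_eq_add_of_le hm
  apply Set.Subset.antisymm
  · rw [Function.iterate_add]
    exact Set.range_comp_subset_range _ _
  · rw [iterate_eq_iterate_add_comp_iterate_right h k]
    exact Set.range_comp_subset_range _ _

theorem imC_iterate_eq_of_le (h : f^[n] = f^[n + 1] ∘ g) {m : ℕ} (hm : n ≤ m) :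
    imC f^[m] = imC f^[n] := by
  unfold imC
  rw [range_iterate_eq_of_le h hm]

end Iterate

/-- If `End_S(A)` is strongly π-regular then `A` is strongly Hopfian and strongly co-Hopfian. -/
theorem stmt18 (M : RAct S A)
    (hreg : ∀ f : A → A, IsEnd M f → ∃ g : A → A, IsEnd M g ∧
      ∃ n : ℕ, 1 ≤ n ∧ f^[n] = g ∘ f^[n + 1] ∧ f^[n] = f^[n + 1] ∘ g) :
    StronglyHopfian M ∧ StronglyCoHopfian M := by
  constructor
  · intro f hf
    obtain ⟨g, -, n, hn, hleft, -⟩ := hreg f hf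
    exact ⟨n, hn, fun m hm => kerC_iterate_eq_of_le hleft hm⟩
  · intro f hf
    obtain ⟨g, -, n, hn, -, hright⟩ := hreg f hf
    exact ⟨n, hn, fun m hm => imC_iterate_eq_of_le hright hm⟩
end
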